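/- For every ρ₀ > 0, the function u(r) := −(1/2)·(ρ₀⁴ − (r² + (√3/2)ρ₀²)²)^{1/2}, defined on the interval 0 < r < ((2−√3)/2)^{1/2}ρ₀, is twice differentiable with u'(r) = r(r² + (√3/2)ρ₀²)/(ρ₀⁴ − (r² + (√3/2)ρ₀²)²)^{1/2}, and satisfies the rotationally symmetric vanishing-E₁ equation (1/3)r⁴u''(r)² − ((4/3)r·u'(r)³ + 2r³u'(r))·u''(r) + (1/3)u'(r)⁶/r² + u'(r)⁴ − r⁴ = 0; moreover u(r) − u(0⁺) = (1/4)ρ₀² − (1/2)(ρ₀⁴ − (r² + (√3/2)ρ₀²)²)^{1/2} where u(0⁺) := lim_{r→0⁺} u(r) = −(1/4)ρ₀². -/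

import Mathlib

/-!
Write `D(r) = c - (r² + a)²`, so that `u = -½√D`, `u' = r(r² + a)/√D` and
`u'' = ((3r² + a)D + 2r²(r² + a)²)/√D³`. After clearing the powers of `s = √D`, the
vanishing-E₁ expression becomes a polynomial in `r`, `a` and `s²`; substituting `s² = D` it
vanishes identically as soon as `3c = 4a²`, which for `c = ρ₀⁴`, `a = (√3/2)ρ₀²` is the
relation `√3² = 3`. The interval `0 < r < √((2 - √3)/2)·ρ₀` is where `r² + a < ρ₀²`, i.e. `D > 0`.
-/

open Filter Topology

namespace ShiftedHeisenbergSphere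

variable (c a : ℝ)

def radicand (r : ℝ) : ℝ := c - (r ^ 2 + a) ^ 2

noncomputable def profile (r : ℝ) : ℝ := -(1 / 2) * √(radicand c a r)

noncomputable def slope (r : ℝ) : ℝ := r * (r ^ 2 + a) / √(radicand c a r)

/-- `p` and `q` stand for `u'(r)` and `u''(r)`. -/
noncomputable def vanishingE1 (r p q : ℝ) : ℝ :=
  (1 / 3) * r ^ 4 * q ^ 2 - ((4 / 3) * r * p ^ 3 + 2 * r ^ 3 * p) * q
    + (1 / 3) * p ^ 6 / r ^ 2 + p ^ 4 - r ^ 4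

variable {c a}

theorem hasDerivAt_radicand (x : ℝ) :
    HasDerivAt (radicand c a) (-(4 * x * (x ^ 2 + a))) x := by
  refine ((((hasDerivAt_pow 2 x).add_const a).pow 2).const_sub c).congr_deriv ?_
  push_cast
  ring

theorem continuous_profile : Continuous (profile c a) := by
  unfold profile radicand
  fun_prop

theorem hasDerivAt_profile {x : ℝ} (hx : 0 < radicand c a x) :
    HasDerivAt (profile c a) (slope c a x) x := by
  have hs : 0 < √(radicand c a x) := Real.sqrt_pos.mpr hx
  refine (((hasDerivAt_radicand x).sqrt hx.ne').const_mul (-(1 / 2) : ℝ)).congr_deriv ?_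
  unfold slope
  field_simp
  ring

theorem hasDerivAt_slope {x : ℝ} (hx : 0 < radicand c a x) :
    HasDerivAt (slope c a)
      (((3 * x ^ 2 + a) * radicand c a x + 2 * x ^ 2 * (x ^ 2 + a) ^ 2)
        / √(radicand c a x) ^ 3) x := by
  have hs : 0 < √(radicand c a x) := Real.sqrt_pos.mpr hx
  have hnum : HasDerivAt (fun y : ℝ => y * (y ^ 2 + a)) (3 * x ^ 2 + a) x := by
    refine ((hasDerivAt_id x).mul ((hasDerivAt_pow 2 x).add_const a)).congr_deriv ?_
    simp only [id, Nat.cast_ofNat]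
    ring
  refine (hnum.div ((hasDerivAt_radicand x).sqrt hx.ne') hs.ne').congr_deriv ?_
  field_simp
  rw [Real.sq_sqrt hx.le]
  ring

theorem deriv_profile_eventuallyEq {x : ℝ} (hx : 0 < radicand c a x) :
    deriv (profile c a) =ᶠ[𝓝 x] slope c a := by
  have hopen : IsOpen {y | 0 < radicand c a y} :=
    isOpen_lt continuous_const (by unfold radicand; fun_prop)
  filter_upwards [hopen.mem_nhds hx] with y hy
  exact (hasDerivAt_profile hy).deriv

theorem vanishingE1_eq_zero {r s : ℝ} (hs : s ≠ 0) (hc : 3 * c = 4 * a ^ 2)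
    (hs2 : s ^ 2 = c - (r ^ 2 + a) ^ 2) :
    vanishingE1 r (r * (r ^ 2 + a) / s)
      (((3 * r ^ 2 + a) * (c - (r ^ 2 + a) ^ 2) + 2 * r ^ 2 * (r ^ 2 + a) ^ 2) / s ^ 3) = 0 := by
  unfold vanishingE1
  rw [← hs2]
  field_simp
  rw [show s ^ 6 = (s ^ 2) ^ 3 by ring, hs2]
  linear_combination (-r ^ 4 * c ^ 2) * hc

theorem hasDerivAt_deriv_profile {x : ℝ} (hx : 0 < radicand c a x) :
    HasDerivAt (deriv (profile c a))
      (((3 * x ^ 2 + a) * radicand c a x + 2 * x ^ 2 * (x ^ 2 + a) ^ 2)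
        / √(radicand c a x) ^ 3) x :=
  (hasDerivAt_slope hx).congr_of_eventuallyEq (deriv_profile_eventuallyEq hx)

theorem vanishingE1_profile {r : ℝ} (hr : 0 < radicand c a r) (hc : 3 * c = 4 * a ^ 2) :
    vanishingE1 r (deriv (profile c a) r) (deriv (deriv (profile c a)) r) = 0 := by
  rw [(hasDerivAt_profile hr).deriv, (hasDerivAt_deriv_profile hr).deriv, slope]
  exact vanishingE1_eq_zero (Real.sqrt_pos.mpr hr).ne' hc (Real.sq_sqrt hr.le)

theorem three_mul_pow_four_eq (ρ₀ : ℝ) : 3 * ρ₀ ^ 4 = 4 * (√3 / 2 * ρ₀ ^ 2) ^ 2 := by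
  linear_combination (-ρ₀ ^ 4) * Real.sq_sqrt (show (0 : ℝ) ≤ 3 by norm_num)

theorem radicand_pos {ρ₀ r : ℝ} (hr : r ∈ Set.Ioo 0 (√((2 - √3) / 2) * ρ₀)) :
    0 < radicand (ρ₀ ^ 4) (√3 / 2 * ρ₀ ^ 2) r := by
  obtain ⟨hr0, hrR⟩ := hr
  have h3 : √3 ^ 2 = 3 := Real.sq_sqrt (by norm_num)
  have hk : √((2 - √3) / 2) ^ 2 = (2 - √3) / 2 :=
    Real.sq_sqrt (by nlinarith [Real.sqrt_nonneg 3])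
  have hlt : r ^ 2 + √3 / 2 * ρ₀ ^ 2 < ρ₀ ^ 2 := by
    have : r ^ 2 < (√((2 - √3) / 2) * ρ₀) ^ 2 := pow_lt_pow_left₀ hrR hr0.le two_ne_zero
    rw [mul_pow, hk] at this
    linarith
  have hnonneg : 0 ≤ r ^ 2 + √3 / 2 * ρ₀ ^ 2 := by positivity
  unfold radicand
  nlinarith

theorem profile_zero (ρ₀ : ℝ) : profile (ρ₀ ^ 4) (√3 / 2 * ρ₀ ^ 2) 0 = -(1 / 4) * ρ₀ ^ 2 := by
  have hD : radicand (ρ₀ ^ 4) (√3 / 2 * ρ₀ ^ 2) 0 = (ρ₀ ^ 2 / 2) ^ 2 := by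
    unfold radicand
    linear_combination three_mul_pow_four_eq ρ₀ / 4
  rw [profile, hD, Real.sqrt_sq (by positivity)]
  ring

end ShiftedHeisenbergSphere

open ShiftedHeisenbergSphere

theorem stmt_18 (ρ₀ : ℝ) (R : ℝ)
    (hR : R = Real.sqrt ((2 - Real.sqrt 3) / 2) * ρ₀)
    (u : ℝ → ℝ)
    (hu : ∀ r, u r =
      -(1 / 2) * Real.sqrt (ρ₀ ^ 4 - (r ^ 2 + (Real.sqrt 3 / 2) * ρ₀ ^ 2) ^ 2)) :
    (∀ r ∈ Set.Ioo (0 : ℝ) R,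
      HasDerivAt u (r * (r ^ 2 + (Real.sqrt 3 / 2) * ρ₀ ^ 2)
        / Real.sqrt (ρ₀ ^ 4 - (r ^ 2 + (Real.sqrt 3 / 2) * ρ₀ ^ 2) ^ 2)) r)
    ∧ (∀ r ∈ Set.Ioo (0 : ℝ) R, DifferentiableAt ℝ (deriv u) r)
    ∧ (∀ r ∈ Set.Ioo (0 : ℝ) R,
        (1 / 3) * r ^ 4 * (deriv (deriv u) r) ^ 2
          - ((4 / 3) * r * (deriv u r) ^ 3 + 2 * r ^ 3 * deriv u r) * deriv (deriv u) r
          + (1 / 3) * (deriv u r) ^ 6 / r ^ 2 + (deriv u r) ^ 4 - r ^ 4 = 0)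
    ∧ Tendsto u (nhdsWithin 0 (Set.Ioi 0)) (nhds (-(1 / 4) * ρ₀ ^ 2))
    ∧ (∀ r ∈ Set.Ioo (0 : ℝ) R,
        u r - (-(1 / 4) * ρ₀ ^ 2) = (1 / 4) * ρ₀ ^ 2
          - (1 / 2) * Real.sqrt (ρ₀ ^ 4 - (r ^ 2 + (Real.sqrt 3 / 2) * ρ₀ ^ 2) ^ 2)) := by
  have hu' : u = profile (ρ₀ ^ 4) (√3 / 2 * ρ₀ ^ 2) := funext hu
  subst hR hu'
  refine ⟨fun r hr => hasDerivAt_profile (radicand_pos hr),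
    fun r hr => (hasDerivAt_deriv_profile (radicand_pos hr)).differentiableAt,
    fun r hr => vanishingE1_profile (radicand_pos hr) (three_mul_pow_four_eq ρ₀), ?_,
    fun r _ => by rw [profile, radicand]; ring⟩
  rw [← profile_zero ρ₀]
  exact continuous_profile.continuousWithinAt
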